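/- Let X be a separable Banach space, μ a convex Borel probability measure on X with full support, ũ ∈ X and h ∈ X. Suppose that for every t ∈ [0,1] the limit r(t) = lim_{ε→0} μ(B_ε(ũ − t h))/μ(B_ε(ũ)) exists (so r(0) = 1), and that r has right derivative 0 at t = 0, i.e. lim_{t→0+} (r(t) − 1)/t = 0. Then r(1) ≤ 1. -/

import Mathlib

/-!
Convexity of `μ` applied to the balls `B_ε(ũ - h)` and `B_ε(ũ)`, whose Minkowski combination with
weights `t, 1 - t` lies in `B_ε(ũ - t h)`, gives `(μ B_ε(ũ - h) / μ B_ε(ũ))^t ≤ μ B_ε(ũ - t h) / μ B_ε(ũ)`,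
hence `r(1)^t ≤ r(t)` in the limit `ε → 0`. If `r(1) > 1`, then `(r(t) - 1)/t ≥ (r(1)^t - 1)/t`, and the
right-hand side tends to `log r(1) > 0` as `t → 0+`, contradicting the vanishing right derivative.
-/

open MeasureTheory Metric Filter Topology Pointwise
open scoped ENNReal

theorem smul_ball_add_smul_ball_subset {E : Type*} [SeminormedAddCommGroup E] [NormedSpace ℝ E]
    {t : ℝ} (ht₀ : 0 ≤ t) (ht₁ : t ≤ 1) (x y : E) (ε : ℝ) :
    t • ball x ε + (1 - t) • ball y ε ⊆ ball (t • x + (1 - t) • y) ε := by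
  rintro _ ⟨_, ⟨a, ha, rfl⟩, _, ⟨b, hb, rfl⟩, rfl⟩
  rw [mem_ball_iff_norm] at ha hb ⊢
  have hcomb : t • (a - x) + (1 - t) • (b - y) ∈ ball (0 : E) ε :=
    convex_ball (0 : E) ε (mem_ball_zero_iff.2 ha) (mem_ball_zero_iff.2 hb) ht₀
      (sub_nonneg.2 ht₁) (add_sub_cancel t 1)
  rwa [mem_ball_zero_iff, show t • (a - x) + (1 - t) • (b - y)
    = t • a + (1 - t) • b - (t • x + (1 - t) • y) by module] at hcomb

theorem Real.div_rpow_le_div_of_rpow_mul_rpow_le {a b c t : ℝ} (ha : 0 ≤ a) (hb : 0 ≤ b)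
    (ht : 0 < t) (h : a ^ t * b ^ (1 - t) ≤ c) : (a / b) ^ t ≤ c / b := by
  rcases hb.eq_or_lt with rfl | hb
  · simp [Real.zero_rpow ht.ne']
  rw [Real.div_rpow ha hb.le, div_le_div_iff₀ (Real.rpow_pos_of_pos hb t) hb]
  calc a ^ t * b = a ^ t * b ^ (1 - t) * b ^ t := by
        rw [mul_assoc, ← Real.rpow_add hb, sub_add_cancel, Real.rpow_one]
    _ ≤ c * b ^ t := by gcongr

theorem ENNReal.toReal_div_rpow_le_of_rpow_mul_rpow_le {a b c : ℝ≥0∞} {t : ℝ} (ht : 0 < t)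
    (hc : c ≠ ⊤) (h : a ^ t * b ^ (1 - t) ≤ c) :
    (a.toReal / b.toReal) ^ t ≤ c.toReal / b.toReal := by
  refine Real.div_rpow_le_div_of_rpow_mul_rpow_le ENNReal.toReal_nonneg ENNReal.toReal_nonneg ht ?_
  rw [ENNReal.toReal_rpow, ENNReal.toReal_rpow, ← ENNReal.toReal_mul]
  exact ENNReal.toReal_mono hc h

theorem le_one_of_rpow_le_of_tendsto_slope {a : ℝ} {f : ℝ → ℝ}
    (hle : ∀ᶠ t in 𝓝[>] 0, a ^ t ≤ f t)
    (hslope : Tendsto (fun t ↦ (f t - 1) / t) (𝓝[>] 0) (𝓝 0)) : a ≤ 1 := by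
  by_contra! ha
  have hlog : Tendsto (fun t ↦ t⁻¹ * (a ^ t - 1)) (𝓝[>] 0) (𝓝 (Real.log a)) :=
    tendsto_rpow_sub_one_log (zero_lt_one.trans ha)
  have hlog_nonpos : Real.log a ≤ 0 := by
    refine le_of_tendsto_of_tendsto hlog hslope ?_
    filter_upwards [hle, self_mem_nhdsWithin] with t ht (htpos : 0 < t)
    rw [inv_mul_eq_div]
    gcongr
  exact (Real.log_pos ha).not_ge hlog_nonpos

theorem measure_ball_ratio_rpow_le {X : Type*} [NormedAddCommGroup X] [NormedSpace ℝ X]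
    [MeasurableSpace X] [BorelSpace X] {μ : Measure X} [IsFiniteMeasure μ]
    (hconv : ∀ (A B : Set X), MeasurableSet A → MeasurableSet B →
      ∀ t : ℝ, 0 ≤ t → t ≤ 1 → μ A ^ t * μ B ^ (1 - t) ≤ μ (t • A + (1 - t) • B))
    {t : ℝ} (ht₀ : 0 < t) (ht₁ : t ≤ 1) (x y : X) (ε : ℝ) :
    ((μ (ball x ε)).toReal / (μ (ball y ε)).toReal) ^ t ≤
      (μ (ball (t • x + (1 - t) • y) ε)).toReal / (μ (ball y ε)).toReal := by
  refine ENNReal.toReal_div_rpow_le_of_rpow_mul_rpow_le ht₀ (measure_ne_top μ _) ?_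
  exact (hconv _ _ measurableSet_ball measurableSet_ball t ht₀.le ht₁).trans
    (measure_mono (smul_ball_add_smul_ball_subset ht₀.le ht₁ x y ε))

theorem stmt5_general {X : Type*} [NormedAddCommGroup X] [NormedSpace ℝ X]
    [MeasurableSpace X] [BorelSpace X]
    (μ : Measure X) [IsProbabilityMeasure μ]
    (hconv : ∀ (A B : Set X), MeasurableSet A → MeasurableSet B →
      ∀ t : ℝ, 0 ≤ t → t ≤ 1 →
      μ A ^ t * μ B ^ (1 - t) ≤ μ (t • A + (1 - t) • B))
    (utilde h : X) (r : ℝ → ℝ)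
    (hr : ∀ t ∈ Set.Icc (0:ℝ) 1,
      Tendsto (fun ε : ℝ =>
          (μ (ball (utilde - t • h) ε)).toReal / (μ (ball utilde ε)).toReal)
        (𝓝[>] 0) (𝓝 (r t)))
    (hderiv : Tendsto (fun t : ℝ => (r t - 1) / t) (𝓝[>] 0) (𝓝 0)) :
    r 1 ≤ 1 := by
  have hinterp : ∀ t : ℝ, t • (utilde - h) + (1 - t) • utilde = utilde - t • h := fun t ↦ by
    module
  have hpow : ∀ t ∈ Set.Ioc (0 : ℝ) 1, r 1 ^ t ≤ r t := by
    rintro t ⟨ht₀, ht₁⟩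
    have hr₁ := (hr 1 (Set.right_mem_Icc.2 zero_le_one)).rpow_const (p := t) (Or.inr ht₀.le)
    rw [one_smul] at hr₁
    refine le_of_tendsto_of_tendsto hr₁ (hr t ⟨ht₀.le, ht₁⟩) (Eventually.of_forall fun ε ↦ ?_)
    simpa only [hinterp] using measure_ball_ratio_rpow_le hconv ht₀ ht₁ (utilde - h) utilde ε
  refine le_one_of_rpow_le_of_tendsto_slope ?_ hderiv
  filter_upwards [Ioc_mem_nhdsGT zero_lt_one] using hpow

/-- Theorem 3.8: for a convex measure, a zero point of the logarithmic derivative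
(expressed via the vanishing right derivative of the small-ball ratio) is a weak
MAP estimate. -/
theorem stmt5 {X : Type*} [NormedAddCommGroup X] [NormedSpace ℝ X] [CompleteSpace X]
    [TopologicalSpace.SeparableSpace X] [MeasurableSpace X] [BorelSpace X]
    (μ : Measure X) [IsProbabilityMeasure μ]
    (hconv : ∀ (A B : Set X), MeasurableSet A → MeasurableSet B →
      ∀ t : ℝ, 0 ≤ t → t ≤ 1 →
      μ A ^ t * μ B ^ (1 - t) ≤ μ (t • A + (1 - t) • B))
    (hfull : ∀ u : X, ∀ ε : ℝ, 0 < ε → 0 < μ (ball u ε))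
    (utilde h : X) (r : ℝ → ℝ)
    (hr : ∀ t ∈ Set.Icc (0:ℝ) 1,
      Tendsto (fun ε : ℝ =>
          (μ (ball (utilde - t • h) ε)).toReal / (μ (ball utilde ε)).toReal)
        (𝓝[>] 0) (𝓝 (r t)))
    (hderiv : Tendsto (fun t : ℝ => (r t - 1) / t) (𝓝[>] 0) (𝓝 0)) :
    r 1 ≤ 1 :=
  stmt5_general μ hconv utilde h r hr hderiv
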